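/- Let X be a type, Θ a type of block parameters, f : Θ → (X → X), and let L ≥ 1. Let m and m' be positive divisors of L with m ∣ m'. Then F^partial_m(L) ⊆ F^partial_{m'}(L): every function realized by a partially shared model with m unique blocks each repeated L/m times is also realized by a partially shared model with m' unique blocks each repeated L/m' times. The witnessing parameters can be chosen periodically, θ'_j = θ_{((j−1) mod m)+1} for j = 1,…,m'. -/
import Mathlib


/-- Ordered composition of `n` maps: `compFin n g = g (n-1) ∘ ⋯ ∘ g 0`. -/
def compFin {X : Type*} : (n : ℕ) → (Fin n → (X → X)) → (X → X)
  | 0, _ => id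
  | n + 1, g => g (Fin.last n) ∘ compFin n (fun i => g i.castSucc)

/-- Partially shared hypothesis class with `m` unique blocks, each block of `m` layers
repeated `L / m` times. -/
def Fpartial {X Θ : Type*} (f : Θ → X → X) (L m : ℕ) : Set (X → X) :=
  { F | ∃ θs : Fin m → Θ, F = (compFin m (fun i => f (θs i)))^[L / m] }

lemma compFin_add {X : Type*} (n k : ℕ) (g : Fin (n + k) → X → X) :
    compFin (n + k) g =
      (compFin k (fun i : Fin k => g ⟨n + i.val, by omega⟩)) ∘
        compFin n (fun i : Fin n => g ⟨i.val, by omega⟩) := by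
  induction k with
  | zero => rfl
  | succ k ih =>
    show compFin (n + k + 1) g = _
    simp only [compFin]
    rw [ih]
    rfl

lemma compFin_mul {X : Type*} (m : ℕ) (hm : 0 < m) (g : Fin m → X → X) :
    ∀ k : ℕ, compFin (m * k) (fun j : Fin (m * k) => g ⟨j.val % m, Nat.mod_lt _ hm⟩) =
      (compFin m g)^[k] := by
  intro k
  induction k with
  | zero => simp [compFin]
  | succ k ih =>
    show compFin (m * k + m) _ = _
    rw [compFin_add, Function.iterate_succ']
    have h1 : (fun i : Fin m => g ⟨(m * k + i.val) % m, Nat.mod_lt _ hm⟩) = g := by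
      funext i
      exact congrArg g (Fin.ext (by simp [Nat.mul_add_mod, Nat.mod_eq_of_lt i.isLt]))
    calc (compFin m fun i : Fin m => g ⟨(m * k + i.val) % m, Nat.mod_lt _ hm⟩) ∘
          compFin (m * k) (fun i : Fin (m * k) => g ⟨i.val % m, Nat.mod_lt _ hm⟩)
        = compFin m g ∘ (compFin m g)^[k] := by rw [h1, ih]

/-- Proposition 2 (Monotone containment under divisibility): if `m` and `m'` are positive
divisors of `L` with `m ∣ m'`, then `F^partial_m(L) ⊆ F^partial_{m'}(L)`, and the witnessing
parameters can be chosen periodically, `θ'_j = θ_{(j mod m)}` (0-indexed). -/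
theorem partial_subset_partial {X Θ : Type*} (f : Θ → X → X) (L m m' : ℕ)
    (hL : 1 ≤ L) (hm : 0 < m) (hm' : 0 < m')
    (hmL : m ∣ L) (hm'L : m' ∣ L) (hmm' : m ∣ m') :
    Fpartial f L m ⊆ Fpartial f L m' ∧
    ∀ θs : Fin m → Θ,
      (compFin m' (fun j => f (θs ⟨j.val % m, Nat.mod_lt _ hm⟩)))^[L / m'] =
        (compFin m (fun i => f (θs i)))^[L / m] := by
  have key : ∀ θs : Fin m → Θ,
      (compFin m' (fun j => f (θs ⟨j.val % m, Nat.mod_lt _ hm⟩)))^[L / m'] =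
        (compFin m (fun i => f (θs i)))^[L / m] := by
    intro θs
    obtain ⟨t, ht⟩ := hmm'
    subst ht
    obtain ⟨s, hs⟩ := hm'L
    subst hs
    rw [compFin_mul m hm (fun i => f (θs i)) t, ← Function.iterate_mul]
    have h1 : m * t * s / (m * t) = s := Nat.mul_div_cancel_left s hm'
    have h2 : m * t * s / m = t * s := by
      rw [mul_assoc]; exact Nat.mul_div_cancel_left _ hm
    rw [h1, h2]
  refine ⟨?_, key⟩
  rintro F ⟨θs, rfl⟩
  exact ⟨fun j => θs ⟨j.val % m, Nat.mod_lt _ hm⟩, (key θs).symm⟩
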